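/- (Edge count identity, equation (17).) Let V be a finite set, θ : V → ℝ with θ_i ≥ 0 for all i, and let D ⊆ V satisfy Σ_{i∈V∖D} θ_i ≥ Σ_{i∈D} θ_i. For S ⊆ V define E(S) = Σ_{i<j, i,j∈S} θ_i·θ_j and E(D,−D) = Σ_{i∈D} Σ_{j∈V∖D} θ_i·θ_j. Then E(D) = (1/4)·( √(E(V) + (1/2)·Σ_{i∈V} θ_i²) − √(E(V) + (1/2)·Σ_{i∈V} θ_i² − 2·E(D,−D)) )² − (1/2)·Σ_{i∈D} θ_i². -/

import Mathlib

open Finset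

namespace EdgeCountIdentity

/-- `E(S) = Σ_{i<j ∈ S} θ_i θ_j`, written on an arbitrary finite vertex set as half the
sum over ordered pairs of distinct vertices of `S`. -/
noncomputable def pairSum {V : Type*} [DecidableEq V] (θ : V → ℝ) (S : Finset V) : ℝ :=
  (∑ q ∈ S.offDiag, θ q.1 * θ q.2) / 2

/-- `E(D, -D) = Σ_{i ∈ D, j ∉ D} θ_i θ_j`. -/
noncomputable def crossSum {V : Type*} [Fintype V] [DecidableEq V] (θ : V → ℝ)
    (D : Finset V) : ℝ :=
  ∑ i ∈ D, ∑ j ∈ Dᶜ, θ i * θ j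

/-! With `a = Σ_{i ∈ D} θ_i` and `b = Σ_{i ∉ D} θ_i`, both radicands are perfect squares:
`E(V) + ½ Σ θ_i² = (a + b)² / 2` and, since `E(D, -D) = a b`, the second one is `(b - a)² / 2`.
The difference of the square roots is therefore `2a / √2`, and `E(D) = (a² - Σ_{i ∈ D} θ_i²) / 2`. -/

theorem two_mul_pairSum {V : Type*} [DecidableEq V] (θ : V → ℝ) (S : Finset V) :
    2 * pairSum θ S = (∑ i ∈ S, θ i) ^ 2 - ∑ i ∈ S, θ i ^ 2 := by
  have hsq : (∑ i ∈ S, θ i) ^ 2 = ∑ q ∈ S ×ˢ S, θ q.1 * θ q.2 := by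
    rw [sq, sum_mul_sum, sum_product]
  rw [pairSum, hsq, ← diag_union_offDiag, sum_union (disjoint_diag_offDiag S), sum_diag]
  simp only [sq]
  ring

theorem crossSum_eq_mul {V : Type*} [Fintype V] [DecidableEq V] (θ : V → ℝ) (D : Finset V) :
    crossSum θ D = (∑ i ∈ D, θ i) * ∑ j ∈ Dᶜ, θ j := by
  rw [crossSum, sum_mul_sum]

theorem sqrt_sq_div_two {x : ℝ} (hx : 0 ≤ x) : √(x ^ 2 / 2) = x / √2 := by
  rw [Real.sqrt_div' _ zero_le_two, Real.sqrt_sq hx]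

theorem sqrt_sub_sqrt_sq_div_four {a b : ℝ} (ha : 0 ≤ a) (hab : a ≤ b) :
    (√((a + b) ^ 2 / 2) - √((b - a) ^ 2 / 2)) ^ 2 / 4 = a ^ 2 / 2 := by
  rw [sqrt_sq_div_two (by linarith), sqrt_sq_div_two (by linarith), ← sub_div, div_pow,
    Real.sq_sqrt zero_le_two]
  ring

/-- **Edge count identity (equation (17)).** -/
theorem edge_count_identity {V : Type*} [Fintype V] [DecidableEq V]
    (θ : V → ℝ) (hθ : ∀ i, 0 ≤ θ i) (D : Finset V)
    (hbal : ∑ i ∈ D, θ i ≤ ∑ i ∈ Dᶜ, θ i) :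
    pairSum θ D =
      (Real.sqrt (pairSum θ Finset.univ + (∑ i, (θ i)^2) / 2) -
        Real.sqrt (pairSum θ Finset.univ + (∑ i, (θ i)^2) / 2 - 2 * crossSum θ D))^2 / 4 -
      (∑ i ∈ D, (θ i)^2) / 2 := by
  set a := ∑ i ∈ D, θ i
  set b := ∑ i ∈ Dᶜ, θ i
  have hsum : ∑ i, θ i = a + b := (sum_add_sum_compl D θ).symm
  have hV : pairSum θ univ + (∑ i, θ i ^ 2) / 2 = (a + b) ^ 2 / 2 := by
    have h := two_mul_pairSum θ univ
    rw [hsum] at h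
    linarith
  have hcut : pairSum θ univ + (∑ i, θ i ^ 2) / 2 - 2 * crossSum θ D = (b - a) ^ 2 / 2 := by
    rw [hV, crossSum_eq_mul]
    ring
  rw [hcut, hV, sqrt_sub_sqrt_sq_div_four (sum_nonneg fun i _ => hθ i) hbal]
  linarith [two_mul_pairSum θ D]

end EdgeCountIdentity
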